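/- Let α ∈ [0,1], ρ > 0, and let a₀(n), a₁(n) be real sequences. Then for every n ≥ 2 and every x ∈ [0,1]: (i) J_{n,α,ρ}^{M,1}(e₀;x) = 2a₀(n)+a₁(n), and (ii) J_{n,α,ρ}^{M,1}(e₁;x) = (2a₀(n)+a₁(n))x + (1/(nρ+2))·(1−2x)(a₀(n)(ρ+2)+a₁(n)(ρ+1)), where e_i(t) = t^i. -/

import Mathlib

open MeasureTheory Finset Filter

noncomputable def bin (m : ℕ) (j : ℤ) : ℝ :=
  if 0 ≤ j ∧ j ≤ (m : ℤ) then (m.choose j.toNat : ℝ) else 0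

/-- The α-Bernstein basis polynomial `p_{n,k}^α(x)` (with `k : ℤ`, vanishing out of range). -/
noncomputable def bp (α : ℝ) (n : ℕ) (k : ℤ) (x : ℝ) : ℝ :=
  if n = 1 then (if k = 0 then 1 - x else if k = 1 then x else 0)
  else
    (1 - α) * (bin (n - 2) k * x ^ k.toNat * (1 - x) ^ (n - 1 - k.toNat)
      + bin (n - 2) (k - 2) * x ^ (k.toNat - 1) * (1 - x) ^ (n - k.toNat))
    + α * bin n k * x ^ k.toNat * (1 - x) ^ (n - k.toNat)

/-- Euler Beta function. -/
noncomputable def betaFn (a b : ℝ) : ℝ := Real.Gamma a * Real.Gamma b / Real.Gamma (a + b)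

/-- The Pălțănea kernel `μ_{n,k}^ρ(t)`. -/
noncomputable def pal (ρ : ℝ) (n k : ℕ) (t : ℝ) : ℝ :=
  t ^ ((k : ℝ) * ρ) * (1 - t) ^ (((n : ℝ) - (k : ℝ)) * ρ)
    / betaFn ((k : ℝ) * ρ + 1) (((n : ℝ) - (k : ℝ)) * ρ + 1)

/-- First-order modified α-Bernstein–Pălțănea operator `J_{n,α,ρ}^{M,1}(f;x)`. -/
noncomputable def J1 (α ρ : ℝ) (a0 a1 : ℕ → ℝ) (n : ℕ) (f : ℝ → ℝ) (x : ℝ) : ℝ :=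
  ∑ k ∈ Finset.range (n + 1),
    ((a1 n * x + a0 n) * bp α (n - 1) (k : ℤ) x
      + (a1 n * (1 - x) + a0 n) * bp α (n - 1) ((k : ℤ) - 1) x)
    * ∫ t in (0:ℝ)..1, pal ρ n k t * f t

/-! The kernel moments are ratios of Beta functions: `∫ μ_{n,k}^ρ = 1` and
`∫ t μ_{n,k}^ρ(t) dt = (kρ + 1)/(nρ + 2)`, both affine in `k`. Each operator value therefore reduces
to `∑ₖ p_{n-1,k}^α(x) (A + Bk)` and to the same sum with the index shifted by one. For `n - 1 ≥ 2`,
`p_{n-1,k}^α` is a combination of `(1 - x) b_{n-3,k}`, `x b_{n-3,k-2}` and `b_{n-1,k}` with classical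
Bernstein polynomials `b`, whose zeroth and first moments are `1` and `(degree) · x`; this gives
`A + B(n-1)x` and `A + B((n-1)x + 1)`. -/

lemma betaFn_eq_beta : betaFn = ProbabilityTheory.beta := rfl

lemma integral_rpow_mul_one_sub_rpow {a b : ℝ} (ha : -1 < a) (hb : -1 < b) :
    ∫ t in (0:ℝ)..1, t ^ a * (1 - t) ^ b = betaFn (a + 1) (b + 1) := by
  have hcast : Complex.betaIntegral ↑(a + 1) ↑(b + 1)
      = ((∫ t in (0:ℝ)..1, t ^ a * (1 - t) ^ b : ℝ) : ℂ) := by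
    rw [Complex.betaIntegral, ← intervalIntegral.integral_ofReal]
    refine intervalIntegral.integral_congr fun t ht => ?_
    rw [Set.uIcc_of_le zero_le_one] at ht
    simp only [Complex.ofReal_mul, Complex.ofReal_add, Complex.ofReal_one, add_sub_cancel_right]
    rw [Complex.ofReal_cpow ht.1, Complex.ofReal_cpow (sub_nonneg.2 ht.2)]
    push_cast
    rfl
  rw [betaFn_eq_beta, ProbabilityTheory.beta_eq_betaIntegralReal _ _ (by linarith) (by linarith),
    hcast, Complex.ofReal_re]

lemma betaFn_pos {a b : ℝ} (ha : 0 < a) (hb : 0 < b) : 0 < betaFn a b :=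
  ProbabilityTheory.beta_pos ha hb

lemma betaFn_add_one_left {a b : ℝ} (ha : 0 < a) (hb : 0 < b) :
    betaFn (a + 1) b = a / (a + b) * betaFn a b := by
  have hab : Real.Gamma (a + b) ≠ 0 := (Real.Gamma_pos_of_pos (by linarith)).ne'
  rw [betaFn, betaFn, Real.Gamma_add_one ha.ne', add_right_comm, Real.Gamma_add_one (by linarith)]
  field_simp

section Kernel

variable {ρ : ℝ} {n k : ℕ}

lemma integral_pal (hρ : 0 ≤ ρ) (hk : k ≤ n) : ∫ t in (0:ℝ)..1, pal ρ n k t = 1 := by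
  have ha : 0 ≤ (k : ℝ) * ρ := by positivity
  have hb : 0 ≤ ((n : ℝ) - k) * ρ := mul_nonneg (sub_nonneg.2 (by exact_mod_cast hk)) hρ
  unfold pal
  rw [intervalIntegral.integral_div, integral_rpow_mul_one_sub_rpow (by linarith) (by linarith),
    div_self (betaFn_pos (by linarith) (by linarith)).ne']

lemma integral_pal_mul_id (hρ : 0 ≤ ρ) (hk : k ≤ n) :
    ∫ t in (0:ℝ)..1, pal ρ n k t * t = (k * ρ + 1) / (n * ρ + 2) := by
  set a := (k : ℝ) * ρ
  set b := ((n : ℝ) - k) * ρ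
  have ha : 0 ≤ a := by positivity
  have hb : 0 ≤ b := mul_nonneg (sub_nonneg.2 (by exact_mod_cast hk)) hρ
  have hpal : ∀ t ∈ Set.uIcc (0:ℝ) 1,
      pal ρ n k t * t = t ^ (a + 1) * (1 - t) ^ b / betaFn (a + 1) (b + 1) := by
    intro t ht
    rw [Set.uIcc_of_le zero_le_one] at ht
    rw [pal, Real.rpow_add_one' ht.1 (by linarith)]
    ring
  rw [intervalIntegral.integral_congr hpal, intervalIntegral.integral_div,
    integral_rpow_mul_one_sub_rpow (by linarith) (by linarith), add_assoc, one_add_one_eq_two,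
    show a + 2 = (a + 1) + 1 by ring, betaFn_add_one_left (by linarith) (by linarith),
    mul_div_assoc, div_self (betaFn_pos (by linarith) (by linarith)).ne', mul_one]
  congr 1
  simp only [a, b]
  ring

end Kernel

lemma sum_bernstein_mul_affine (x A B : ℝ) {q N : ℕ} (hN : q + 1 ≤ N) :
    ∑ k ∈ range N, (q.choose k : ℝ) * x ^ k * (1 - x) ^ (q - k) * (A + B * k)
      = A + B * (q * x) := by
  have hsum := congrArg (Polynomial.eval x) (bernsteinPolynomial.sum ℝ q)
  have hmom := congrArg (Polynomial.eval x) (bernsteinPolynomial.sum_smul ℝ q)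
  simp only [Polynomial.eval_finsetSum, bernsteinPolynomial, Polynomial.eval_mul,
    Polynomial.eval_pow, Polynomial.eval_natCast, Polynomial.eval_sub, Polynomial.eval_one,
    Polynomial.eval_X, nsmul_eq_mul] at hsum hmom
  rw [← sum_subset (range_subset_range.2 hN) fun k _ hk => by
    simp [Nat.choose_eq_zero_of_lt (by simpa using hk : q < k)]]
  simp only [mul_add, sum_add_distrib, ← sum_mul, hsum, ← hmom, mul_sum]
  congr 1
  · ring
  · exact sum_congr rfl fun k _ => by ring

lemma bin_natCast (q k : ℕ) : bin q k = q.choose k := by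
  unfold bin
  split_ifs with h
  · simp
  · simp [Nat.choose_eq_zero_of_lt (by omega : q < k)]

lemma bin_of_neg {q : ℕ} {j : ℤ} (hj : j < 0) : bin q j = 0 :=
  if_neg (by omega)

lemma bin_of_lt {q : ℕ} {j : ℤ} (hj : (q : ℤ) < j) : bin q j = 0 :=
  if_neg (by omega)

section BernsteinBasis

variable (α x : ℝ)

lemma bp_neg_one (m : ℕ) : bp α m (-1) x = 0 := by
  rcases eq_or_ne m 1 with rfl | hm
  · simp [bp]
  · rw [bp, if_neg hm, bin_of_neg (by norm_num), bin_of_neg (by norm_num),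
      bin_of_neg (by norm_num)]
    ring

lemma bp_natCast_of_lt {m k : ℕ} (hm : 1 ≤ m) (hk : m < k) : bp α m k x = 0 := by
  rcases eq_or_ne m 1 with rfl | hm'
  · simp [bp, show k ≠ 0 by omega, show k ≠ 1 by omega]
  · rw [bp, if_neg hm', bin_of_lt (by omega), bin_of_lt (by omega), bin_of_lt (by omega)]
    ring

lemma bp_add_two_natCast (q k : ℕ) :
    bp α (q + 2) k x
      = (1 - α) * ((q.choose k : ℝ) * x ^ k * (1 - x) ^ (q + 1 - k)
          + bin q ((k : ℤ) - 2) * x ^ (k - 1) * (1 - x) ^ (q + 2 - k))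
        + α * ((q + 2).choose k : ℝ) * x ^ k * (1 - x) ^ (q + 2 - k) := by
  simp [bp, bin_natCast]

lemma sum_bp_add_two_mul_affine (A B : ℝ) (q : ℕ) :
    ∑ k ∈ range (q + 3), bp α (q + 2) k x * (A + B * k) = A + B * ((q + 2 : ℕ) * x) := by
  have h₁ : ∑ k ∈ range (q + 3), (q.choose k : ℝ) * x ^ k * (1 - x) ^ (q + 1 - k) * (A + B * k)
      = (1 - x) * (A + B * (q * x)) := by
    rw [← sum_bernstein_mul_affine x A B (N := q + 3) (by omega), mul_sum]
    refine sum_congr rfl fun k _ => ?_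
    rcases le_or_gt k q with hk | hk
    · rw [show q + 1 - k = q - k + 1 by omega]; ring
    · simp [Nat.choose_eq_zero_of_lt hk]
  have h₂ : ∑ k ∈ range (q + 3),
      bin q ((k : ℤ) - 2) * x ^ (k - 1) * (1 - x) ^ (q + 2 - k) * (A + B * k)
      = x * ((A + 2 * B) + B * (q * x)) := by
    rw [← sum_bernstein_mul_affine x (A + 2 * B) B le_rfl, mul_sum, sum_range_succ',
      sum_range_succ', bin_of_neg (by norm_num), bin_of_neg (by norm_num)]
    simp only [zero_mul, add_zero]
    refine sum_congr rfl fun k _ => ?_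
    rw [show ((k + 1 + 1 : ℕ) : ℤ) - 2 = k by push_cast; ring, bin_natCast,
      show q + 2 - (k + 1 + 1) = q - k by omega]
    push_cast
    ring
  have h₃ := sum_bernstein_mul_affine x A B (q := q + 2) (N := q + 3) le_rfl
  simp only [mul_assoc] at h₁ h₂ h₃
  simp only [bp_add_two_natCast, add_mul, mul_assoc, sum_add_distrib, ← mul_sum, h₁, h₂, h₃]
  push_cast
  ring

lemma sum_bp_mul_affine (A B : ℝ) {m N : ℕ} (hm : 1 ≤ m) (hN : m + 1 ≤ N) :
    ∑ k ∈ range N, bp α m k x * (A + B * k) = A + B * (m * x) := by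
  rw [← sum_subset (range_subset_range.2 hN) fun k _ hk => by
    rw [bp_natCast_of_lt α x hm (by simpa using hk), zero_mul]]
  obtain rfl | ⟨q, rfl⟩ : m = 1 ∨ ∃ q, m = q + 2 := by
    rcases m with _ | _ | q <;> simp_all
  · simp [sum_range_succ, bp]
    ring
  · exact sum_bp_add_two_mul_affine α x A B q

lemma sum_bp_sub_one_mul_affine (A B : ℝ) {m : ℕ} (hm : 1 ≤ m) :
    ∑ k ∈ range (m + 2), bp α m ((k : ℤ) - 1) x * (A + B * k) = A + B * (m * x + 1) := by
  rw [sum_range_succ']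
  simp only [Nat.cast_add, Nat.cast_one, Nat.cast_zero, add_sub_cancel_right, zero_sub,
    bp_neg_one, zero_mul, add_zero]
  calc ∑ k ∈ range (m + 1), bp α m k x * (A + B * (k + 1))
      = ∑ k ∈ range (m + 1), bp α m k x * ((A + B) + B * k) :=
        sum_congr rfl fun k _ => by ring
    _ = A + B * (m * x + 1) := by
        rw [sum_bp_mul_affine α x _ _ hm le_rfl]
        ring

end BernsteinBasis

lemma J1_eq_of_integral_pal_mul_eq_affine {α ρ : ℝ} {a0 a1 : ℕ → ℝ} {m : ℕ} (hm : 1 ≤ m)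
    {f : ℝ → ℝ} {A B : ℝ}
    (hf : ∀ k ≤ m + 1, ∫ t in (0:ℝ)..1, pal ρ (m + 1) k t * f t = A + B * k) (x : ℝ) :
    J1 α ρ a0 a1 (m + 1) f x
      = (a1 (m + 1) * x + a0 (m + 1)) * (A + B * (m * x))
        + (a1 (m + 1) * (1 - x) + a0 (m + 1)) * (A + B * (m * x + 1)) := by
  unfold J1
  rw [Nat.add_sub_cancel,
    sum_congr rfl fun k hk => by rw [hf k (by simpa [Nat.lt_succ_iff] using hk)]]
  simp only [add_mul, mul_assoc, sum_add_distrib, ← mul_sum]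
  rw [sum_bp_mul_affine α x A B hm (Nat.le_succ _), sum_bp_sub_one_mul_affine α x A B hm]

theorem stmt_0_general (α ρ : ℝ) (hρ : 0 < ρ)
    (a0 a1 : ℕ → ℝ) (n : ℕ) (hn : 2 ≤ n) (x : ℝ) :
    J1 α ρ a0 a1 n (fun _ => (1:ℝ)) x = 2 * a0 n + a1 n ∧
    J1 α ρ a0 a1 n (fun t => t) x
      = (2 * a0 n + a1 n) * x
        + (1 / ((n : ℝ) * ρ + 2))
          * ((1 - 2 * x) * (a0 n * (ρ + 2) + a1 n * (ρ + 1))) := by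
  obtain ⟨m, rfl⟩ : ∃ m, n = m + 1 := ⟨n - 1, by omega⟩
  have hm : 1 ≤ m := by omega
  have hD : ((m + 1 : ℕ) : ℝ) * ρ + 2 ≠ 0 := by positivity
  constructor
  · rw [J1_eq_of_integral_pal_mul_eq_affine hm (A := 1) (B := 0) fun k hk => by
      simpa using integral_pal hρ.le hk]
    ring
  · rw [J1_eq_of_integral_pal_mul_eq_affine hm (A := 1 / ((m + 1 : ℕ) * ρ + 2))
      (B := ρ / ((m + 1 : ℕ) * ρ + 2)) fun k hk => by
        rw [integral_pal_mul_id hρ.le hk]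
        ring]
    field_simp
    push_cast
    ring

theorem stmt_0 (α ρ : ℝ) (hα : α ∈ Set.Icc (0:ℝ) 1) (hρ : 0 < ρ)
    (a0 a1 : ℕ → ℝ) (n : ℕ) (hn : 2 ≤ n) (x : ℝ) (hx : x ∈ Set.Icc (0:ℝ) 1) :
    J1 α ρ a0 a1 n (fun _ => (1:ℝ)) x = 2 * a0 n + a1 n ∧
    J1 α ρ a0 a1 n (fun t => t) x
      = (2 * a0 n + a1 n) * x
        + (1 / ((n : ℝ) * ρ + 2))
          * ((1 - 2 * x) * (a0 n * (ρ + 2) + a1 n * (ρ + 1))) :=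
  stmt_0_general α ρ hρ a0 a1 n hn x
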